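/- For every real ε > 0, there exists a finite tree T such that ν(T) > (2 − ε)·γ(T); in other words, the constant 2 in the known bound ν(T)/γ(T) < 2 for trees cannot be improved. -/

import Mathlib

open SimpleGraph

section Defs

variable {V : Type*}

/-- A dominating set: every vertex is in `D` or adjacent to a vertex of `D`. -/
def IsDomSet (G : SimpleGraph V) (D : Finset V) : Prop :=
  ∀ v : V, v ∈ D ∨ ∃ u ∈ D, G.Adj u v

/-- The domination number: minimum size of a dominating set. -/
noncomputable def domNum (G : SimpleGraph V) : ℕ :=
  sInf {n : ℕ | ∃ D : Finset V, IsDomSet G D ∧ D.card = n}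

/-- Number of Laplacian eigenvalues (with multiplicity) in `[0,1)`,
equivalently `< 1` since the Laplacian is positive semidefinite. -/
noncomputable def muNum [Fintype V] [DecidableEq V] (G : SimpleGraph V) : ℕ :=
  letI := Classical.decRel G.Adj
  Nat.card {i : V // (SimpleGraph.posSemidef_lapMatrix ℝ G).isHermitian.eigenvalues i < 1}

/-- Number of Laplacian eigenvalues (with multiplicity) that are at least `2`. -/
noncomputable def nuNum [Fintype V] [DecidableEq V] (G : SimpleGraph V) : ℕ :=
  letI := Classical.decRel G.Adj
  Nat.card {i : V // 2 ≤ (SimpleGraph.posSemidef_lapMatrix ℝ G).isHermitian.eigenvalues i}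

/-- The degree of a vertex, as the number of its neighbors. -/
noncomputable def degNat (G : SimpleGraph V) (v : V) : ℕ :=
  Nat.card {u : V // G.Adj v u}

/-- A leaf is a vertex of degree one. -/
def IsLeaf (G : SimpleGraph V) (v : V) : Prop := degNat G v = 1

/-- A penultimate vertex is a non-leaf adjacent to a leaf. -/
def IsPenultimate (G : SimpleGraph V) (v : V) : Prop :=
  ¬ IsLeaf G v ∧ ∃ u, G.Adj v u ∧ IsLeaf G u

/-- A deep vertex is neither a leaf nor penultimate. -/
def IsDeep (G : SimpleGraph V) (v : V) : Prop :=
  ¬ IsLeaf G v ∧ ¬ IsPenultimate G v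

/-- The number of penultimate vertices. -/
noncomputable def pNum (G : SimpleGraph V) : ℕ :=
  Nat.card {v : V // IsPenultimate G v}

/-- Contraction of the clean path `a-b-c-d`: the graph on `V \ {b,c,d}` in which `x,y`
are adjacent iff they are adjacent in the original graph, or one of them equals `a` and
the other is a neighbor of `d` (any surviving neighbor of `d` is automatically `≠ c`). -/
def contractCleanPath (G : SimpleGraph V) (a _b c d : V) :
    SimpleGraph {x : V // x ≠ _b ∧ x ≠ c ∧ x ≠ d} :=
  SimpleGraph.fromRel (fun x y => G.Adj x.1 y.1 ∨ (x.1 = a ∧ G.Adj d y.1))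

end Defs


namespace NuGamma
open Finset

def par (j : ℕ) : ℕ := if j % 5 = 0 ∨ j % 5 = 4 then j - 1 else 5 * (j / 5)
lemma par_lt {j : ℕ} (h : j ≠ 0) : par j < j := by unfold par; split <;> omega
def pg (N : ℕ) : SimpleGraph (Fin N) :=
  SimpleGraph.fromRel (fun a b => a.1 ≠ 0 ∧ b.1 = par a.1)
lemma pg_adj {N : ℕ} (a b : Fin N) :
    (pg N).Adj a b ↔ (a.1 ≠ 0 ∧ b.1 = par a.1) ∨ (b.1 ≠ 0 ∧ a.1 = par b.1) := by
  rw [pg, fromRel_adj]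
  constructor
  · rintro ⟨-, h⟩; exact h
  · intro h
    refine ⟨?_, h⟩
    rcases h with ⟨h0, he⟩ | ⟨h0, he⟩ <;>
    · intro hab
      have h1 := par_lt h0
      have h2 : a.1 = b.1 := congrArg Fin.val hab
      omega

/-- a smaller neighbor of `m` must be its parent -/
lemma pg_adj_lt {N : ℕ} {a b : Fin N} (h : (pg N).Adj a b) (hlt : b < a) : b.1 = par a.1 := by
  rw [pg_adj] at h
  rcases h with ⟨h0, he⟩ | ⟨h0, he⟩
  · exact he
  · exfalso; have := par_lt h0; rw [Fin.lt_def] at hlt; omega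


lemma pg_acyclic (N : ℕ) : (pg N).IsAcyclic := by
  intro v c hc
  classical
  have hne : c.support.toFinset.Nonempty := by
    rw [List.toFinset_nonempty_iff]; exact c.support_ne_nil
  obtain ⟨m, hm_mem, hm_max⟩ := Finset.exists_max_image c.support.toFinset id hne
  have hmax : ∀ u ∈ c.support, u ≤ m := fun u hu => hm_max u (List.mem_toFinset.2 hu)
  rw [List.mem_toFinset] at hm_mem
  have hc' := hc.rotate hm_mem
  set c' := c.rotate m hm_mem with hc'def
  have hsupp : ∀ u ∈ c'.support, u ≤ m := by
    intro u hu
    rw [SimpleGraph.Walk.support_eq_cons c'] at hu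
    rcases List.mem_cons.1 hu with rfl | hu
    · exact le_refl _
    · exact hmax u (List.mem_of_mem_tail
        ((SimpleGraph.Walk.support_rotate c m hm_mem).mem_iff.1 hu))
  clear_value c'
  cases c' with
  | nil => exact SimpleGraph.Walk.IsCycle.not_of_nil hc'
  | cons h q =>
    rename_i u
    rw [SimpleGraph.Walk.cons_isCycle_iff] at hc'
    obtain ⟨hq_path, hedge⟩ := hc'
    have hum : u ≠ m := fun he => h.ne (he.symm)
    have hqrev : ¬ q.reverse.Nil := SimpleGraph.Walk.not_nil_of_ne h.ne
    set w := q.reverse.getVert 1 with hw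
    have hadj : (pg N).Adj m w := q.reverse.adj_snd hqrev
    have hedge_mem : s(m, w) ∈ q.edges := by
      have h1 : s(m, w) ∈ q.reverse.edges := by
        rw [← SimpleGraph.Walk.cons_tail_eq q.reverse hqrev, SimpleGraph.Walk.edges_cons]
        exact List.mem_cons_self
      rw [SimpleGraph.Walk.edges_reverse, List.mem_reverse] at h1
      exact h1
    have hw_supp : w ∈ q.support := by
      have h1 : w ∈ q.reverse.support := by
        rw [SimpleGraph.Walk.mem_support_iff_exists_getVert]
        exact ⟨1, rfl, by rw [SimpleGraph.Walk.not_nil_iff_lt_length] at hqrev; omega⟩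
      rwa [SimpleGraph.Walk.support_reverse, List.mem_reverse] at h1
    -- both u and w are smaller neighbors of m, hence both equal the parent
    have hu_le : u ≤ m := hsupp u (by
      rw [SimpleGraph.Walk.support_cons]
      exact List.mem_cons_of_mem _ q.start_mem_support)
    have hw_le : w ≤ m := hsupp w (by
      rw [SimpleGraph.Walk.support_cons]
      exact List.mem_cons_of_mem _ hw_supp)
    have hu_lt : u < m := lt_of_le_of_ne hu_le hum
    have hw_lt : w < m := lt_of_le_of_ne hw_le (fun he => hadj.ne he.symm)
    have h1 : u.1 = par m.1 := pg_adj_lt h hu_lt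
    have h2 : w.1 = par m.1 := pg_adj_lt hadj hw_lt
    have huw : u = w := Fin.ext (h1.trans h2.symm)
    rw [← huw] at hedge_mem
    exact hedge hedge_mem

lemma pg_isTree {N : ℕ} (hN : 0 < N) : (pg N).IsTree := by
  constructor
  · -- connected
    rw [connected_iff]
    refine ⟨?_, ⟨⟨0, hN⟩⟩⟩
    have key : ∀ n : ℕ, ∀ v : Fin N, v.1 = n → (pg N).Reachable v ⟨0, hN⟩ := by
      intro n
      induction n using Nat.strong_induction_on with
      | _ n ih =>
        intro v hv
        rcases Nat.eq_zero_or_pos n with h | h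
        · have : v = ⟨0, hN⟩ := Fin.ext (by simpa using hv.trans h)
          rw [this]
        · have hv0 : v.1 ≠ 0 := by omega
          have hlt : par v.1 < v.1 := par_lt hv0
          have hp : par v.1 < N := hlt.trans v.2
          have hadj : (pg N).Adj v ⟨par v.1, hp⟩ := by
            rw [pg_adj]; exact Or.inl ⟨hv0, rfl⟩
          exact (hadj.reachable).trans (ih (par v.1) (by omega) _ rfl)
    intro a b
    exact (key a.1 a rfl).trans (key b.1 b rfl).symm
  · exact pg_acyclic N

def xe {N : ℕ} (x : Fin N → ℝ) (j : ℕ) : ℝ := if h : j < N then x ⟨j, h⟩ else 0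

/-- parent as a `Fin N` map -/
def pf {N : ℕ} (i : Fin N) : Fin N :=
  if h : i.1 = 0 then i else ⟨par i.1, (par_lt h).trans i.2⟩

lemma quad_form (N : ℕ) [inst : DecidableRel (pg N).Adj] (x : Fin N → ℝ) :
    dotProduct x (((pg N).lapMatrix ℝ).mulVec x) =
      ∑ j ∈ range N, (if j ≠ 0 then (xe x j - xe x (par j))^2 else 0) := by
  classical
  rw [← Matrix.toLinearMap₂'_apply', lapMatrix_toLinearMap₂']
  have key : ∀ i j : Fin N, (if (pg N).Adj i j then (x i - x j)^2 else 0) =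
      (if (i.1 ≠ 0 ∧ j.1 = par i.1) then (x i - x j)^2 else 0) +
      (if (j.1 ≠ 0 ∧ i.1 = par j.1) then (x i - x j)^2 else 0) := by
    intro i j
    by_cases h1 : (i.1 ≠ 0 ∧ j.1 = par i.1) <;> by_cases h2 : (j.1 ≠ 0 ∧ i.1 = par j.1)
    · exfalso
      have := par_lt h1.1; have := par_lt h2.1; omega
    · rw [if_pos, if_pos h1, if_neg h2, add_zero]
      rw [pg_adj]; exact Or.inl h1
    · rw [if_pos, if_neg h1, if_pos h2, zero_add]
      rw [pg_adj]; exact Or.inr h2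
    · rw [if_neg, if_neg h1, if_neg h2, add_zero]
      rw [pg_adj]; tauto
  simp_rw [key, Finset.sum_add_distrib]
  have swap : (∑ i : Fin N, ∑ j : Fin N, if (j.1 ≠ 0 ∧ i.1 = par j.1) then (x i - x j)^2 else 0)
      = ∑ i : Fin N, ∑ j : Fin N, if (i.1 ≠ 0 ∧ j.1 = par i.1) then (x i - x j)^2 else 0 := by
    rw [Finset.sum_comm]
    apply Finset.sum_congr rfl; intro i _
    apply Finset.sum_congr rfl; intro j _
    split
    · ring
    · rfl
  rw [swap, ← two_mul]
  have inner_sum : ∀ i : Fin N, (∑ j : Fin N, if (i.1 ≠ 0 ∧ j.1 = par i.1) then (x i - x j)^2 else 0)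
      = (if i.1 ≠ 0 then (x i - x (pf i))^2 else 0) := by
    intro i
    by_cases h0 : i.1 = 0
    · rw [if_neg (by simp [h0])]
      apply Finset.sum_eq_zero
      intro j _
      rw [if_neg (by simp [h0])]
    · rw [if_pos h0]
      have hcond : ∀ j : Fin N, (i.1 ≠ 0 ∧ j.1 = par i.1) ↔ j = pf i := by
        intro j
        rw [Fin.ext_iff]
        simp [pf, dif_neg h0, h0]
      simp_rw [hcond]
      rw [Finset.sum_ite_eq' Finset.univ (pf i) (fun j => (x i - x j)^2)]
      rw [if_pos (Finset.mem_univ _)]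
  simp_rw [inner_sum]
  rw [mul_div_cancel_left₀ _ (two_ne_zero (α := ℝ))]
  rw [← Fin.sum_univ_eq_sum_range (fun j => if j ≠ 0 then (xe x j - xe x (par j))^2 else 0) N]
  apply Finset.sum_congr rfl
  intro i _
  by_cases h0 : i.1 = 0
  · rw [if_neg (by simp [h0]), if_neg (by simp [h0])]
  · rw [if_pos h0, if_pos h0]
    congr 1
    have h1 : xe x i.1 = x i := by rw [xe, dif_pos i.2]
    have h2 : xe x (par i.1) = x (pf i) := by
      rw [xe, dif_pos ((par_lt h0).trans i.2)]
      congr 1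
      simp [pf, dif_neg h0]
    rw [h1, h2]

lemma dot_self (N : ℕ) (x : Fin N → ℝ) :
    dotProduct x x = ∑ j ∈ range N, (xe x j)^2 := by
  rw [← Fin.sum_univ_eq_sum_range (fun j => (xe x j)^2) N, dotProduct]
  apply Finset.sum_congr rfl
  intro i _
  rw [xe, dif_pos i.2, Fin.eta, sq]

variable {N : ℕ} {A : Matrix (Fin N) (Fin N) ℝ} (hA : A.IsHermitian)

local notation "E" => EuclideanSpace ℝ (Fin N)

lemma dot_eq_inner (x y : E) : dotProduct (x : Fin N → ℝ) (y : Fin N → ℝ) = inner ℝ x y := by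
  simp [PiLp.inner_apply, dotProduct, mul_comm]

lemma repr_mulVec (x : E) (i : Fin N) :
    hA.eigenvectorBasis.repr (WithLp.toLp 2 (A.mulVec x) : E) i
      = hA.eigenvalues i * hA.eigenvectorBasis.repr x i := by
  rw [OrthonormalBasis.repr_apply_apply, OrthonormalBasis.repr_apply_apply]
  rw [← dot_eq_inner, ← dot_eq_inner]
  rw [WithLp.ofLp_toLp, Matrix.dotProduct_mulVec]
  have hT : A.transpose = A := by
    rw [← Matrix.conjTranspose_eq_transpose_of_trivial]; exact hA.eq
  have h1 : Matrix.vecMul (hA.eigenvectorBasis i : Fin N → ℝ) A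
      = A.mulVec (hA.eigenvectorBasis i : Fin N → ℝ) := by
    rw [← Matrix.mulVec_transpose, hT]
  have hmv : A.mulVec (hA.eigenvectorBasis i) =
      hA.eigenvalues i • (hA.eigenvectorBasis i : Fin N → ℝ) := hA.mulVec_eigenvectorBasis i
  rw [h1, hmv]
  simp [dotProduct, PiLp.smul_apply, Finset.mul_sum, mul_assoc, smul_eq_mul]

lemma inner_eq_sum_repr (x y : E) :
    (inner ℝ x y : ℝ) = ∑ i, hA.eigenvectorBasis.repr x i * hA.eigenvectorBasis.repr y i := by
  rw [← LinearIsometryEquiv.inner_map_map hA.eigenvectorBasis.repr x y]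
  simp only [PiLp.inner_apply, RCLike.inner_apply, starRingEnd_apply, star_trivial, mul_comm]

/-- Rayleigh expansion of the quadratic form. -/
lemma quad_eq_sum_eig (x : E) :
    dotProduct (x : Fin N → ℝ) (A.mulVec x) =
      ∑ i, hA.eigenvalues i * (hA.eigenvectorBasis.repr x i)^2 := by
  rw [dot_eq_inner x (WithLp.toLp 2 (A.mulVec x) : E), inner_eq_sum_repr hA]
  apply Finset.sum_congr rfl
  intro i _
  rw [repr_mulVec hA]
  ring

lemma dot_self_eq_sum_repr (x : E) :
    dotProduct (x : Fin N → ℝ) (x : Fin N → ℝ) =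
      ∑ i, (hA.eigenvectorBasis.repr x i)^2 := by
  rw [dot_eq_inner x x, inner_eq_sum_repr hA]
  simp [sq]

lemma repr_eq_zero_of_mem_span {P : Fin N → Prop} (x : E)
    (hx : x ∈ Submodule.span ℝ (hA.eigenvectorBasis '' {i | P i})) {i : Fin N} (hi : ¬ P i) :
    hA.eigenvectorBasis.repr x i = 0 := by
  set f : E →ₗ[ℝ] ℝ :=
    (EuclideanSpace.projₗ i).comp ((hA.eigenvectorBasis.repr.toLinearEquiv : E ≃ₗ[ℝ] _) :
      E →ₗ[ℝ] EuclideanSpace ℝ (Fin N)) with hf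
  have hspan : Submodule.span ℝ (hA.eigenvectorBasis '' {i | P i}) ≤ LinearMap.ker f := by
    rw [Submodule.span_le]
    rintro y ⟨j, hj, rfl⟩
    simp only [SetLike.mem_coe, LinearMap.mem_ker]
    show hA.eigenvectorBasis.repr (hA.eigenvectorBasis j) i = 0
    rw [hA.eigenvectorBasis.repr_self j]
    have hij : i ≠ j := fun he => hi (he ▸ hj)
    simp only [EuclideanSpace.single_apply]
    rw [if_neg hij]
  have h2 := hspan hx
  rw [LinearMap.mem_ker] at h2
  exact h2


def ww (K : ℕ) : (Fin (K+1) ⊕ Fin K) → EuclideanSpace ℝ (Fin (5*K+3))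
  | .inl i => WithLp.toLp 2 fun m => if m.1 = 5*i.1 then (1:ℝ) else 0
  | .inr i => WithLp.toLp 2 fun m => if m.1 = 5*i.1+3 then (1:ℝ) else if m.1 = 5*i.1+4 then -1 else 0

lemma sum_block (f : ℕ → ℝ) (K : ℕ) :
    ∑ j ∈ range (5*K+3), f j =
      (∑ i ∈ range K, (f (5*i) + f (5*i+1) + f (5*i+2) + f (5*i+3) + f (5*i+4)))
      + (f (5*K) + f (5*K+1) + f (5*K+2)) := by
  induction K with
  | zero =>
    norm_num [Finset.sum_range_succ]
  | succ K ih =>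
    have h : 5*(K+1)+3 = ((((5*K+3)+1)+1)+1)+1+1 := by ring
    rw [h, Finset.sum_range_succ, Finset.sum_range_succ, Finset.sum_range_succ,
        Finset.sum_range_succ, Finset.sum_range_succ, ih, Finset.sum_range_succ]
    have e1 : 5*K+3 = 5*K+3 := rfl
    have e2 : 5*K+3+1 = 5*K+4 := by ring
    have e3 : 5*K+3+1+1 = 5*(K+1) := by ring
    have e4 : 5*K+3+1+1+1 = 5*(K+1)+1 := by ring
    have e5 : 5*K+3+1+1+1+1 = 5*(K+1)+2 := by ring
    rw [e2, e3, e4, e5]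
    ring

-- coordinate functional
lemma coord_sum {ι : Type*} [Fintype ι] (c : ι → ℝ) (v : ι → EuclideanSpace ℝ (Fin (5*K+3)))
    (m : Fin (5*K+3)) : (∑ j, c j • v j) m = ∑ j, c j * (v j) m := by
  have h : ∀ (y : EuclideanSpace ℝ (Fin (5*K+3))),
      y m = inner ℝ (EuclideanSpace.single m (1:ℝ)) y := by
    intro y
    rw [EuclideanSpace.inner_single_left]
    simp
  rw [h (∑ j, c j • v j), inner_sum]
  apply Finset.sum_congr rfl
  intro j _
  rw [inner_smul_right, ← h]

@[simp] lemma ww_inl_apply (i : Fin (K+1)) (m : Fin (5*K+3)) :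
    ww K (.inl i) m = if m.1 = 5*i.1 then (1:ℝ) else 0 := rfl
@[simp] lemma ww_inr_apply (i : Fin K) (m : Fin (5*K+3)) :
    ww K (.inr i) m = if m.1 = 5*i.1+3 then (1:ℝ) else if m.1 = 5*i.1+4 then -1 else 0 := rfl

lemma eval_pt (c : Fin (K+1) ⊕ Fin K → ℝ) (pt : ℕ) (hpt : pt < 5*K+3) :
    xe (∑ j, c j • ww K j : EuclideanSpace ℝ (Fin (5*K+3))) pt =
      (∑ i' : Fin (K+1), c (.inl i') * (if pt = 5*i'.1 then 1 else 0)) +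
      (∑ i' : Fin K, c (.inr i') * (if pt = 5*i'.1+3 then 1 else if pt = 5*i'.1+4 then -1 else 0)) := by
  rw [xe, dif_pos hpt, coord_sum, Fintype.sum_sum_type]
  rfl

lemma eval0 (c : Fin (K+1) ⊕ Fin K → ℝ) {i : ℕ} (h : i < K+1) :
    xe (∑ j, c j • ww K j : EuclideanSpace ℝ (Fin (5*K+3))) (5*i) = c (.inl ⟨i,h⟩) := by
  rw [eval_pt c (5*i) (by omega)]
  rw [Finset.sum_eq_single (⟨i,h⟩ : Fin (K+1))]
  · rw [if_pos rfl, mul_one]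
    have h2 : ∀ i' : Fin K, c (.inr i') * (if 5*i = 5*i'.1+3 then (1:ℝ) else if 5*i = 5*i'.1+4 then -1 else 0) = 0 := by
      intro i'
      rw [if_neg (by omega), if_neg (by omega), mul_zero]
    rw [Finset.sum_congr rfl (fun i' _ => h2 i'), Finset.sum_const_zero, add_zero]
  · intro b _ hb
    have hne : (5*i : ℕ) ≠ 5*b.1 := by
      intro he; apply hb; apply Fin.ext; show b.1 = i; omega
    rw [if_neg hne, mul_zero]
  · intro hmem; exact absurd (Finset.mem_univ _) hmem

lemma eval12 (c : Fin (K+1) ⊕ Fin K → ℝ) {i r : ℕ} (h : i < K+1) (hr : r = 1 ∨ r = 2) :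
    xe (∑ j, c j • ww K j : EuclideanSpace ℝ (Fin (5*K+3))) (5*i+r) = 0 := by
  rw [eval_pt c (5*i+r) (by omega)]
  have h1 : ∀ i' : Fin (K+1), c (.inl i') * (if 5*i+r = 5*i'.1 then (1:ℝ) else 0) = 0 := by
    intro i'; rw [if_neg (by omega), mul_zero]
  have h2 : ∀ i' : Fin K, c (.inr i') * (if 5*i+r = 5*i'.1+3 then (1:ℝ) else if 5*i+r = 5*i'.1+4 then -1 else 0) = 0 := by
    intro i'; rw [if_neg (by omega), if_neg (by omega), mul_zero]
  rw [Finset.sum_congr rfl (fun i' _ => h1 i'), Finset.sum_congr rfl (fun i' _ => h2 i')]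
  simp

lemma eval3 (c : Fin (K+1) ⊕ Fin K → ℝ) {i : ℕ} (h : i < K) :
    xe (∑ j, c j • ww K j : EuclideanSpace ℝ (Fin (5*K+3))) (5*i+3) = c (.inr ⟨i,h⟩) := by
  rw [eval_pt c (5*i+3) (by omega)]
  have h1 : ∀ i' : Fin (K+1), c (.inl i') * (if 5*i+3 = 5*i'.1 then (1:ℝ) else 0) = 0 := by
    intro i'; rw [if_neg (by omega), mul_zero]
  rw [Finset.sum_congr rfl (fun i' _ => h1 i'), Finset.sum_const_zero, zero_add]
  rw [Finset.sum_eq_single (⟨i,h⟩ : Fin K)]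
  · rw [if_pos rfl, mul_one]
  · intro b _ hb
    have hne : (5*i+3 : ℕ) ≠ 5*b.1+3 := by
      intro he; apply hb; apply Fin.ext; show b.1 = i; omega
    rw [if_neg hne, if_neg (by omega), mul_zero]
  · intro hmem; exact absurd (Finset.mem_univ _) hmem

lemma eval4 (c : Fin (K+1) ⊕ Fin K → ℝ) {i : ℕ} (h : i < K) :
    xe (∑ j, c j • ww K j : EuclideanSpace ℝ (Fin (5*K+3))) (5*i+4) = - c (.inr ⟨i,h⟩) := by
  rw [eval_pt c (5*i+4) (by omega)]
  have h1 : ∀ i' : Fin (K+1), c (.inl i') * (if 5*i+4 = 5*i'.1 then (1:ℝ) else 0) = 0 := by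
    intro i'; rw [if_neg (by omega), mul_zero]
  rw [Finset.sum_congr rfl (fun i' _ => h1 i'), Finset.sum_const_zero, zero_add]
  rw [Finset.sum_eq_single (⟨i,h⟩ : Fin K)]
  · rw [if_neg (by omega), if_pos rfl]
    ring
  · intro b _ hb
    have hne : (5*i+4 : ℕ) ≠ 5*b.1+4 := by
      intro he; apply hb; apply Fin.ext; show b.1 = i; omega
    rw [if_neg (by omega), if_neg hne, mul_zero]
  · intro hmem; exact absurd (Finset.mem_univ _) hmem

lemma xe_zero (j : ℕ) : xe (0 : EuclideanSpace ℝ (Fin (5*K+3))) j = 0 := by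
  rw [xe]; split <;> rfl

lemma ww_li : LinearIndependent ℝ (ww K) := by
  rw [Fintype.linearIndependent_iff]
  intro g hg j
  cases j with
  | inl i =>
    have := eval0 g i.2
    rw [hg, xe_zero] at this
    exact this.symm
  | inr i =>
    have := eval3 g i.2
    rw [hg, xe_zero] at this
    exact this.symm

lemma par_eval (i r : ℕ) (h : r = 1 ∨ r = 2 ∨ r = 3) : par (5*i+r) = 5*i := by
  unfold par
  rw [if_neg (by omega)]
  omega

lemma par4' (i : ℕ) : par (5*i+4) = 5*i+3 := by
  unfold par
  rw [if_pos (by omega)]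
  omega

/-- The key inequality: on the subspace spanned by `ww`, the quadratic form is at least
twice the norm squared. -/
lemma quad_ge (K : ℕ) [inst : DecidableRel (pg (5*K+3)).Adj] (c : Fin (K+1) ⊕ Fin K → ℝ) :
    2 * dotProduct ((∑ j, c j • ww K j : EuclideanSpace ℝ (Fin (5*K+3))) : Fin (5*K+3) → ℝ)
        ((∑ j, c j • ww K j : EuclideanSpace ℝ (Fin (5*K+3))) : Fin (5*K+3) → ℝ) ≤
    dotProduct ((∑ j, c j • ww K j : EuclideanSpace ℝ (Fin (5*K+3))) : Fin (5*K+3) → ℝ)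
      (((pg (5*K+3)).lapMatrix ℝ).mulVec ((∑ j, c j • ww K j : EuclideanSpace ℝ (Fin (5*K+3))) : Fin (5*K+3) → ℝ)) := by
  rw [quad_form (5*K+3) _, dot_self (5*K+3) _]
  rw [sum_block, sum_block, mul_add, Finset.mul_sum]
  apply add_le_add
  · apply Finset.sum_le_sum
    intro i hi
    rw [Finset.mem_range] at hi
    have hiK : i < K + 1 := by omega
    rw [if_pos (show 5*i+1 ≠ 0 by omega), if_pos (show 5*i+2 ≠ 0 by omega),
        if_pos (show 5*i+3 ≠ 0 by omega), if_pos (show 5*i+4 ≠ 0 by omega)]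
    rw [par_eval i 1 (by omega), par_eval i 2 (by omega), par_eval i 3 (by omega), par4' i]
    rw [eval0 c hiK, eval12 c hiK (Or.inl rfl), eval12 c hiK (Or.inr rfl),
        eval3 c hi, eval4 c hi]
    split
    · nlinarith [sq_nonneg (c (.inr ⟨i, hi⟩) - c (.inl ⟨i, hiK⟩)),
        sq_nonneg (c (Sum.inl ⟨i, hiK⟩)
          - xe (∑ j : Fin (K + 1) ⊕ Fin K, c j • ww K j) (par (5 * i)))]
    · nlinarith [sq_nonneg (c (.inr ⟨i, hi⟩) - c (.inl ⟨i, hiK⟩))]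
  · have hKK : K < K + 1 := by omega
    rw [if_pos (show 5*K+1 ≠ 0 by omega), if_pos (show 5*K+2 ≠ 0 by omega)]
    rw [par_eval K 1 (by omega), par_eval K 2 (by omega)]
    rw [eval0 c hKK, eval12 c hKK (Or.inl rfl), eval12 c hKK (Or.inr rfl)]
    split
    · nlinarith [sq_nonneg (c (Sum.inl ⟨K, hKK⟩)
          - xe (∑ j : Fin (K + 1) ⊕ Fin K, c j • ww K j) (par (5 * K)))]
    · nlinarith []

lemma nu_ge (K : ℕ) : 2*K+1 ≤ nuNum (pg (5*K+3)) := by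
  letI inst : DecidableRel (pg (5*K+3)).Adj := Classical.decRel _
  have hL := (SimpleGraph.posSemidef_lapMatrix ℝ (pg (5*K+3))).isHermitian
  show 2*K+1 ≤ Nat.card
    {i : Fin (5*K+3) //
      2 ≤ (SimpleGraph.posSemidef_lapMatrix ℝ (pg (5*K+3))).isHermitian.eigenvalues i}
  set B := (SimpleGraph.posSemidef_lapMatrix ℝ (pg (5*K+3))).isHermitian.eigenvectorBasis with hB
  set lam := (SimpleGraph.posSemidef_lapMatrix ℝ (pg (5*K+3))).isHermitian.eigenvalues with hlam
  set WW : Submodule ℝ (EuclideanSpace ℝ (Fin (5*K+3))) :=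
    Submodule.span ℝ (Set.range (ww K)) with hWW
  set SS : Submodule ℝ (EuclideanSpace ℝ (Fin (5*K+3))) :=
    Submodule.span ℝ (B '' {i | lam i < 2}) with hSS
  have hinf : WW ⊓ SS = ⊥ := by
    rw [Submodule.eq_bot_iff]
    rintro x ⟨hxW, hxS⟩
    by_contra hx0
    obtain ⟨c, hc⟩ := (Submodule.mem_span_range_iff_exists_fun ℝ).1 hxW
    have hW : 2 * dotProduct (x : Fin (5*K+3) → ℝ) (x : Fin (5*K+3) → ℝ) ≤
        dotProduct (x : Fin (5*K+3) → ℝ)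
          (((pg (5*K+3)).lapMatrix ℝ).mulVec x) := by
      rw [← hc]
      exact quad_ge K c
    have hgood : ∀ i, ¬ (lam i < 2) → B.repr x i = 0 := fun i hi =>
      repr_eq_zero_of_mem_span (P := fun i => lam i < 2) _ x hxS hi
    have hq := quad_eq_sum_eig (SimpleGraph.posSemidef_lapMatrix ℝ (pg (5*K+3))).isHermitian x
    have hd := dot_self_eq_sum_repr (SimpleGraph.posSemidef_lapMatrix ℝ (pg (5*K+3))).isHermitian x
    have hex : ∃ i, B.repr x i ≠ 0 := by
      by_contra hall
      push_neg at hall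
      apply hx0
      have hrepr0 : B.repr x = 0 := by
        ext i
        exact hall i
      simpa using B.repr.map_eq_zero_iff.1 hrepr0
    obtain ⟨i0, hi0⟩ := hex
    have hi0bad : lam i0 < 2 := by
      by_contra h
      exact hi0 (hgood i0 h)
    have hstrict : dotProduct (x : Fin (5*K+3) → ℝ)
        (((pg (5*K+3)).lapMatrix ℝ).mulVec x) <
        2 * dotProduct (x : Fin (5*K+3) → ℝ) (x : Fin (5*K+3) → ℝ) := by
      rw [hq, hd, Finset.mul_sum]
      apply Finset.sum_lt_sum
      · intro i _
        by_cases hbad : lam i < 2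
        · nlinarith [sq_nonneg (B.repr x i)]
        · rw [hgood i hbad]
          simp
      · refine ⟨i0, Finset.mem_univ _, ?_⟩
        have h2 : 0 < (B.repr x i0)^2 := by positivity
        nlinarith [h2, hi0bad]
    linarith
  have hW_rank : Module.finrank ℝ WW = 2*K+1 := by
    rw [hWW, finrank_span_eq_card ww_li]
    simp only [Fintype.card_sum, Fintype.card_fin]
    omega
  have hS_rank : Module.finrank ℝ SS = Fintype.card {i : Fin (5*K+3) // lam i < 2} := by
    have hli : LinearIndependent ℝ (fun i : {i : Fin (5*K+3) // lam i < 2} => B i.1) :=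
      B.orthonormal.linearIndependent.comp Subtype.val Subtype.val_injective
    have hrange : Set.range (fun i : {i : Fin (5*K+3) // lam i < 2} => B i.1)
        = B '' {i | lam i < 2} := by
      rw [show (fun i : {i : Fin (5*K+3) // lam i < 2} => B i.1) = B ∘ Subtype.val from rfl,
        Set.range_comp, Subtype.range_coe_subtype]
    have hSS2 : SS = Submodule.span ℝ
        (Set.range (fun i : {i : Fin (5*K+3) // lam i < 2} => B i.1)) := by
      rw [hSS, hrange]
    rw [hSS2, finrank_span_eq_card hli]
  have hsum := Submodule.finrank_sup_add_finrank_inf_eq WW SS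
  rw [hinf, finrank_bot, add_zero, hW_rank, hS_rank] at hsum
  have hle : Module.finrank ℝ ↥(WW ⊔ SS) ≤ Module.finrank ℝ (EuclideanSpace ℝ (Fin (5*K+3))) :=
    Submodule.finrank_le _
  rw [finrank_euclideanSpace, Fintype.card_fin] at hle
  have hcompl : Fintype.card {i : Fin (5*K+3) // lam i < 2}
      = Fintype.card {i : Fin (5*K+3) // ¬ (2 ≤ lam i)} :=
    Fintype.card_congr (Equiv.subtypeEquivRight (fun i => not_le.symm))
  have hsplit := Fintype.card_subtype_compl (fun i : Fin (5*K+3) => 2 ≤ lam i)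
  have hcard_le := Fintype.card_subtype_le (fun i : Fin (5*K+3) => 2 ≤ lam i)
  rw [Fintype.card_fin] at hsplit hcard_le
  rw [Nat.card_eq_fintype_card]
  omega

lemma dom_le (K : ℕ) : domNum (pg (5*K+3)) ≤ K+1 := by
  apply Nat.sInf_le
  refine ⟨(Finset.range (K+1)).attach.image
    (fun i => (⟨5*i.1, by have := Finset.mem_range.1 i.2; omega⟩ : Fin (5*K+3))), ?_, ?_⟩
  · intro v
    have hv5 : v.1 % 5 = 0 ∨ v.1 % 5 = 1 ∨ v.1 % 5 = 2 ∨ v.1 % 5 = 3 ∨ v.1 % 5 = 4 := by omega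
    have hvlt : v.1 < 5*K+3 := v.2
    have hmem : ∀ (j : ℕ) (hj : j < K+1) (u : Fin (5*K+3)), u.1 = 5*j →
        u ∈ (Finset.range (K+1)).attach.image
          (fun i => (⟨5*i.1, by have := Finset.mem_range.1 i.2; omega⟩ : Fin (5*K+3))) := by
      intro j hj u hu
      rw [Finset.mem_image]
      exact ⟨⟨j, Finset.mem_range.2 hj⟩, Finset.mem_attach _ _, Fin.ext hu.symm⟩
    rcases hv5 with h | h | h | h | h
    · left
      exact hmem (v.1/5) (by omega) v (by omega)
    · right
      refine ⟨⟨5*(v.1/5), by omega⟩, hmem (v.1/5) (by omega) _ rfl, ?_⟩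
      rw [pg_adj]
      right
      refine ⟨by omega, ?_⟩
      show 5*(v.1/5) = par v.1
      unfold par
      rw [if_neg (by omega)]
    · right
      refine ⟨⟨5*(v.1/5), by omega⟩, hmem (v.1/5) (by omega) _ rfl, ?_⟩
      rw [pg_adj]
      right
      refine ⟨by omega, ?_⟩
      show 5*(v.1/5) = par v.1
      unfold par
      rw [if_neg (by omega)]
    · right
      refine ⟨⟨5*(v.1/5), by omega⟩, hmem (v.1/5) (by omega) _ rfl, ?_⟩
      rw [pg_adj]
      right
      refine ⟨by omega, ?_⟩
      show 5*(v.1/5) = par v.1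
      unfold par
      rw [if_neg (by omega)]
    · right
      have hv1 : v.1 + 1 < 5*K+3 := by omega
      refine ⟨⟨v.1+1, hv1⟩, hmem ((v.1+1)/5) (by omega) _
        (show v.1+1 = 5*((v.1+1)/5) by omega), ?_⟩
      rw [pg_adj]
      left
      refine ⟨show v.1+1 ≠ 0 by omega, ?_⟩
      show v.1 = par (v.1+1)
      unfold par
      rw [if_pos (by omega)]
      omega
  · rw [Finset.card_image_of_injective _ (fun a b hab => by
      have h1 := congrArg Fin.val hab
      simp only at h1
      exact Subtype.ext (by omega)), Finset.card_attach, Finset.card_range]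

end NuGamma

/-- For every real `ε > 0` there exists a finite tree `T` with
`ν(T) > (2 − ε)·γ(T)`: the constant `2` in the bound `ν(T)/γ(T) < 2` is optimal. -/
theorem nu_over_gamma_two_is_optimal :
    ∀ ε : ℝ, 0 < ε → ∃ (N : ℕ) (G : SimpleGraph (Fin N)),
      G.IsTree ∧ (2 - ε) * (domNum G : ℝ) < (nuNum G : ℝ) := by
  intro ε hε
  set K := ⌈1/ε⌉₊ with hKdef
  refine ⟨5*K+3, NuGamma.pg (5*K+3), NuGamma.pg_isTree (by omega), ?_⟩
  have hnu := NuGamma.nu_ge K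
  have hdom := NuGamma.dom_le K
  have hKε : 1 < ε * (K+1) := by
    have h1 : (1/ε : ℝ) ≤ (K : ℝ) := Nat.le_ceil _
    have h2 : (1:ℝ) = ε * (1/ε) := by field_simp
    nlinarith
  have hnuR : (2*K+1 : ℝ) ≤ (nuNum (NuGamma.pg (5*K+3)) : ℝ) := by exact_mod_cast hnu
  have hdomR : (domNum (NuGamma.pg (5*K+3)) : ℝ) ≤ ((K:ℝ)+1) := by exact_mod_cast hdom
  have hdom0 : (0:ℝ) ≤ (domNum (NuGamma.pg (5*K+3)) : ℝ) := Nat.cast_nonneg _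
  rcases le_or_gt (2-ε) 0 with hsgn | hsgn
  · calc (2-ε) * (domNum (NuGamma.pg (5*K+3)) : ℝ)
        ≤ 0 := mul_nonpos_of_nonpos_of_nonneg hsgn hdom0
      _ < 2*K+1 := by positivity
      _ ≤ _ := hnuR
  · calc (2-ε) * (domNum (NuGamma.pg (5*K+3)) : ℝ)
        ≤ (2-ε) * ((K:ℝ)+1) := by nlinarith
      _ < 2*K+1 := by nlinarith
      _ ≤ _ := hnuR
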